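/- arXiv:1605.00266 — 5 statements merged into one kernel-verified Lean document; each statement's English description precedes it below -/
import Mathlib

section
/- For nonnegative integers k and n with n ≤ 2k, the sum over all quadruples (n₁,n₂,n₃,n₄) of nonnegative integers with n₁+n₂+n₃+n₄ = k and 2n₁+n₂+n₃ = n of k!/(n₁!n₂!n₃!n₄!) equals (2k)!/(n!(2k−n)!). -/
open Finset

lemma key (k n : ℕ) :
    ((2 * k).choose n : ℕ) =
      ∑ g ∈ (Finset.piAntidiag (Finset.univ : Finset (Fin 4)) k).filter
        (fun g => 2 * g 0 + g 1 + g 2 = n),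
        Nat.multinomial Finset.univ g := by
  have hpoly : ((Polynomial.X + 1 : Polynomial ℕ)) ^ (2 * k)
      = (∑ i : Fin 4, (![Polynomial.X ^ 2, Polynomial.X, Polynomial.X, 1] : Fin 4 → Polynomial ℕ) i) ^ k := by
    rw [Fin.sum_univ_four]
    simp only [Matrix.cons_val_zero, Matrix.cons_val_one, Matrix.head_cons,
      Matrix.cons_val_two, Matrix.tail_cons, Matrix.cons_val_three]
    rw [pow_mul]
    ring_nf
  have := congrArg (fun p => Polynomial.coeff p n) hpoly
  rw [Polynomial.coeff_X_add_one_pow] at this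
  rw [Finset.sum_pow_eq_sum_piAntidiag] at this
  rw [Nat.cast_id] at this
  rw [this]
  rw [Polynomial.finset_sum_coeff]
  rw [Finset.sum_filter]
  apply Finset.sum_congr rfl
  intro g hg
  have hprod : ∏ i : Fin 4, (![Polynomial.X ^ 2, Polynomial.X, Polynomial.X, 1] : Fin 4 → Polynomial ℕ) i ^ g i
      = Polynomial.X ^ (2 * g 0 + g 1 + g 2) := by
    rw [Fin.prod_univ_four]
    simp only [Matrix.cons_val_zero, Matrix.cons_val_one, Matrix.head_cons,
      Matrix.cons_val_two, Matrix.tail_cons, Matrix.cons_val_three, one_pow, mul_one,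
      ← pow_mul, ← pow_add]
  rw [hprod]
  rw [Polynomial.coeff_natCast_mul, Polynomial.coeff_X_pow]
  clear this hpoly hprod
  split_ifs with h1 h2 h2 <;> simp_all

theorem stmt_1 (k n : ℕ) (h : n ≤ 2 * k) :
    ∑ q ∈ (Finset.range (k + 1) ×ˢ Finset.range (k + 1) ×ˢ Finset.range (k + 1)
          ×ˢ Finset.range (k + 1)).filter
        (fun q => q.1 + q.2.1 + q.2.2.1 + q.2.2.2 = k ∧ 2 * q.1 + q.2.1 + q.2.2.1 = n),
      Nat.factorial k /
        (Nat.factorial q.1 * Nat.factorial q.2.1 * Nat.factorial q.2.2.1 * Nat.factorial q.2.2.2)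
      = Nat.factorial (2 * k) / (Nat.factorial n * Nat.factorial (2 * k - n)) := by
  rw [← Nat.choose_eq_factorial_div_factorial h, key k n]
  apply Finset.sum_nbij' (i := fun q => ![q.1, q.2.1, q.2.2.1, q.2.2.2])
    (j := fun g => (g 0, g 1, g 2, g 3))
  · intro q hq
    simp only [Finset.mem_filter, Finset.mem_product, Finset.mem_range] at hq
    simp only [Finset.mem_filter, Finset.mem_piAntidiag, Fin.sum_univ_four]
    simp only [Matrix.cons_val_zero, Matrix.cons_val_one, Matrix.head_cons,
      Matrix.cons_val_two, Matrix.tail_cons, Matrix.cons_val_three]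
    exact ⟨⟨by omega, fun i _ => Finset.mem_univ i⟩, by omega⟩
  · intro g hg
    simp only [Finset.mem_filter, Finset.mem_piAntidiag, Fin.sum_univ_four] at hg
    obtain ⟨⟨hsum, -⟩, hn⟩ := hg
    simp only [Finset.mem_filter, Finset.mem_product, Finset.mem_range]
    omega
  · intro q hq
    simp
  · intro g hg
    funext i
    fin_cases i <;> simp
  · intro q hq
    simp only [Finset.mem_filter, Finset.mem_product, Finset.mem_range] at hq
    obtain ⟨-, hsum, hn⟩ := hq
    simp only [Nat.multinomial, Fin.sum_univ_four, Fin.prod_univ_four]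
    simp only [Matrix.cons_val_zero, Matrix.cons_val_one, Matrix.head_cons,
      Matrix.cons_val_two, Matrix.tail_cons, Matrix.cons_val_three, hsum]
end

section
/- For a finite set A in an abelian group, |A² + Δ(A)| = Σ_{x ∈ A−A} |A + A_x|, where A_x = A ∩ (A−x). -/
/-!
Sort the elements `p` of `A² + Δ(A)` by their difference `x = p.1 - p.2`, which lies in `A - A`.
The point `p` lies in `A² + Δ(A)` iff `p = (a + c, b + c)` with `a, b, c ∈ A`; with `b + c = p.2` this
says `b ∈ A` and `b + x = a ∈ A`, i.e. `p.2 ∈ A + A_x`. So the fibre over `x` is in bijection with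
`A + A_x` via `p ↦ p.2`.
-/

open Finset Pointwise

section

variable {G : Type*} [AddCommGroup G] [DecidableEq G] {A : Finset G}

lemma mem_inter_image_sub_iff {x t : G} : t ∈ A ∩ A.image (· - x) ↔ t ∈ A ∧ t + x ∈ A := by
  simp only [mem_inter, mem_image, sub_eq_iff_eq_add, exists_eq_right]

lemma mem_sub_of_mem_inter_image_sub {x t : G} (ht : t ∈ A ∩ A.image (· - x)) : x ∈ A - A := by
  obtain ⟨htA, htxA⟩ := mem_inter_image_sub_iff.1 ht
  simpa using sub_mem_sub htxA htA

lemma mem_prod_add_image_diag_iff {p : G × G} :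
    p ∈ A ×ˢ A + A.image (fun a => (a, a)) ↔ p.2 ∈ A + (A ∩ A.image (· - (p.1 - p.2))) := by
  simp only [mem_add, mem_product, mem_image, mem_inter_image_sub_iff]
  constructor
  · rintro ⟨q, ⟨hq₁, hq₂⟩, _, ⟨c, hc, rfl⟩, rfl⟩
    exact ⟨c, hc, q.2, ⟨hq₂, by simpa using hq₁⟩, by simp [add_comm]⟩
  · rintro ⟨c, hc, b, ⟨hb, hbx⟩, hp⟩
    refine ⟨(b + (p.1 - p.2), b), ⟨hbx, hb⟩, (c, c), ⟨c, hc, rfl⟩, ?_⟩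
    ext <;> simp only [Prod.fst_add, Prod.snd_add] <;> rw [← hp] <;> abel

lemma fst_sub_snd_mem_sub_of_mem_prod_add_image_diag {p : G × G}
    (hp : p ∈ A ×ˢ A + A.image (fun a => (a, a))) : p.1 - p.2 ∈ A - A := by
  obtain ⟨_, _, t, ht, _⟩ := mem_add.1 (mem_prod_add_image_diag_iff.1 hp)
  exact mem_sub_of_mem_inter_image_sub ht

lemma filter_prod_add_image_diag_sub_eq (x : G) :
    {p ∈ A ×ˢ A + A.image (fun a => (a, a)) | p.1 - p.2 = x}
      = (A + (A ∩ A.image (· - x))).image fun t => (t + x, t) := by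
  ext p
  rw [mem_filter, mem_prod_add_image_diag_iff, mem_image]
  constructor
  · rintro ⟨hp, rfl⟩
    exact ⟨p.2, hp, by simp⟩
  · rintro ⟨t, ht, rfl⟩
    simpa using ht

end

theorem stmt_5 {G : Type*} [AddCommGroup G] [DecidableEq G] (A : Finset G) :
    ((A ×ˢ A) + A.image fun a => (a, a)).card
      = ∑ x ∈ A - A, (A + (A ∩ A.image fun a => a - x)).card := by
  rw [card_eq_sum_card_fiberwise fun _ => fst_sub_snd_mem_sub_of_mem_prod_add_image_diag]
  refine sum_congr rfl fun x _ => ?_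
  rw [filter_prod_add_image_diag_sub_eq, card_image_of_injective _ fun _ _ h => congrArg Prod.snd h]
end

section
/- For finitely supported functions f₀,…,f_{k−1} : G → ℂ on an abelian group G, Σ_{x₁,…,x_{l−1}} C_l(f₀)(x)·(C_l(f₁)∘⋯∘C_l(f_{k−1}))(x) = Σ_z (f₀∘f₁∘⋯∘f_{k−1})^l(z), where ∘ denotes the correlation (f∘g)(x) = Σ_y f(y)g(y+x) and C_l(f)(x₁,…,x_{l−1}) = Σ_z f(z)f(z+x₁)⋯f(z+x_{l−1}). -/
open Finset

def ext {G : Type*} [AddCommGroup G] (l : ℕ) (x : Fin (l - 1) → G) : Fin l → G :=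
  fun i => if h : i.1 = 0 then 0 else x ⟨i.1 - 1, by omega⟩

/-- `C_l(f)(x₁,…,x_{l-1}) = Σ_z f(z) f(z+x₁) ⋯ f(z+x_{l-1})`. -/
noncomputable def Cconv {G : Type*} [AddCommGroup G] (l : ℕ) (f : G → ℂ)
    (x : Fin (l - 1) → G) : ℂ :=
  ∑ᶠ z : G, ∏ i : Fin l, f (z + ext l x i)

/-- Correlation `(f ∘ g)(x) = Σ_y f(y) g(y + x)`. -/
noncomputable def corr {α : Type*} [AddCommGroup α] (f g : α → ℂ) : α → ℂ :=
  fun x => ∑ᶠ y : α, f y * g (y + x)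

/-- Iterated correlation `f₀ ∘ f₁ ∘ ⋯ ∘ fₙ`. -/
noncomputable def iterCorr {α : Type*} [AddCommGroup α] : (n : ℕ) → (Fin (n + 1) → α → ℂ) → α → ℂ
  | 0, f => f 0
  | n + 1, f => corr (f 0) (iterCorr n fun i => f i.succ)

section Aux

open Function

variable {G : Type*} [AddCommGroup G]

/-- difference set as a finset -/
noncomputable def Dset (S : Finset G) : Finset G :=
  letI := Classical.decEq G
  Finset.image₂ (· - ·) S S

lemma mem_Dset {S : Finset G} {a b : G} (ha : a ∈ S) (hb : b ∈ S) : a - b ∈ Dset S := by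
  letI := Classical.decEq G
  exact Finset.mem_image₂_of_mem ha hb

lemma exists_ne_zero_of_finsum_ne_zero {α : Type*} {h : α → ℂ} (H : ∑ᶠ i, h i ≠ 0) :
    ∃ i, h i ≠ 0 := by
  by_contra hc
  push_neg at hc
  exact H (finsum_eq_zero_of_forall_eq_zero hc)

lemma Cconv_succ (m : ℕ) (f : G → ℂ) (x : Fin m → G) :
    Cconv (m + 1) f x = ∑ᶠ z : G, f z * ∏ j : Fin m, f (z + x j) := by
  unfold Cconv
  congr 1
  funext z
  rw [Fin.prod_univ_succ]
  have h0 : ext (m + 1) x 0 = 0 := rfl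
  have hs : ∀ i : Fin m, ext (m + 1) x i.succ = x i := by
    intro i
    show dite _ _ _ = _
    rw [dif_neg (by simp)]
    exact congrArg x (Fin.ext (by simp))
  rw [h0, add_zero]
  simp only [hs]

lemma Cconv_finset {f : G → ℂ} {S : Finset G} (hfS : support f ⊆ ↑S) (m : ℕ) (x : Fin m → G) :
    Cconv (m + 1) f x = ∑ u ∈ S, f u * ∏ j : Fin m, f (u + x j) := by
  rw [Cconv_succ]
  apply finsum_eq_sum_of_support_subset
  intro u hu
  exact hfS (mem_support.2 (left_ne_zero_of_mul hu))

lemma corr_finset {f : G → ℂ} (g : G → ℂ) {S : Finset G} (hfS : support f ⊆ ↑S) (z : G) :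
    corr f g z = ∑ u ∈ S, f u * g (u + z) := by
  apply finsum_eq_sum_of_support_subset
  intro u hu
  exact hfS (mem_support.2 (left_ne_zero_of_mul hu))

lemma corr_support {f g : G → ℂ} {S : Finset G} (hfS : support f ⊆ ↑S) (hgS : support g ⊆ ↑S) :
    support (corr f g) ⊆ ↑(Dset S) := by
  intro z hz
  obtain ⟨y, hy⟩ := exists_ne_zero_of_finsum_ne_zero (mem_support.1 hz)
  have h1 : f y ≠ 0 := left_ne_zero_of_mul hy
  have h2 : g (y + z) ≠ 0 := right_ne_zero_of_mul hy
  have : z = (y + z) - y := by abel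
  rw [this]
  exact Finset.mem_coe.2 (mem_Dset (hgS (mem_support.2 h2)) (hfS (mem_support.2 h1)))

lemma Cconv_mem_D {f : G → ℂ} {S : Finset G} (hfS : support f ⊆ ↑S) {m : ℕ} {x : Fin m → G}
    (hx : Cconv (m + 1) f x ≠ 0) : ∀ j, x j ∈ Dset S := by
  rw [Cconv_succ] at hx
  obtain ⟨u, hu⟩ := exists_ne_zero_of_finsum_ne_zero hx
  intro j
  have h1 : f u ≠ 0 := left_ne_zero_of_mul hu
  have h2 : ∀ j : Fin m, f (u + x j) ≠ 0 := by
    have := right_ne_zero_of_mul hu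
    rw [Finset.prod_ne_zero_iff] at this
    exact fun j => this j (Finset.mem_univ j)
  have : x j = (u + x j) - u := by abel
  rw [this]
  exact mem_Dset (hfS (mem_support.2 (h2 j))) (hfS (mem_support.2 h1))

lemma sum_D_eq_sum_S {S : Finset G} (u : G) (T : G → ℂ)
    (hT : ∀ z, T z ≠ 0 → z ∈ Dset S) (hT' : ∀ v, T (v - u) ≠ 0 → v ∈ S) :
    ∑ z ∈ Dset S, T z = ∑ v ∈ S, T (v - u) :=
  calc ∑ z ∈ Dset S, T z = ∑ᶠ z, T z := (finsum_eq_sum_of_support_subset T fun z hz => hT z hz).symm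
    _ = ∑ᶠ v, T (Equiv.subRight u v) := (finsum_comp_equiv (Equiv.subRight u)).symm
    _ = ∑ v ∈ S, T (v - u) := finsum_eq_sum_of_support_subset _ fun v hv => hT' v hv

lemma corr_shift {f g : G → ℂ} {S : Finset G} (hfS : support f ⊆ ↑S) {u : G} (hu : u ∈ S)
    (v c : G) :
    corr f g (v - u + c) = ∑ t ∈ Dset S, f (u + t) * g (v + t + c) := by
  have h1 : corr f g (v - u + c) = ∑ᶠ t, f (u + t) * g (u + t + (v - u + c)) :=
    (finsum_comp_equiv (Equiv.addLeft u) (f := fun y => f y * g (y + (v - u + c)))).symm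
  have h2 : ∀ t : G, u + t + (v - u + c) = v + t + c := fun t => by abel
  rw [h1]
  simp only [h2]
  apply finsum_eq_sum_of_support_subset
  intro t ht
  have h3 : f (u + t) ≠ 0 := left_ne_zero_of_mul ht
  have : t = (u + t) - u := by abel
  rw [this]
  exact Finset.mem_coe.2 (mem_Dset (hfS (mem_support.2 h3)) hu)

lemma key1 (m : ℕ) (f g : G → ℂ) (hf : (support f).Finite) (hg : (support g).Finite) :
    (∑ᶠ x : Fin m → G, Cconv (m + 1) f x * Cconv (m + 1) g x)
      = ∑ᶠ z : G, corr f g z ^ (m + 1) := by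
  classical
  set S : Finset G := hf.toFinset ∪ hg.toFinset with hS
  have hfS : support f ⊆ ↑S := by
    intro a ha; simp [hS, Set.Finite.mem_toFinset, ha]
  have hgS : support g ⊆ ↑S := by
    intro a ha; simp [hS, Set.Finite.mem_toFinset, ha]
  -- convert to finset sums
  have hLsupp : support (fun x : Fin m → G => Cconv (m + 1) f x * Cconv (m + 1) g x)
      ⊆ ↑(Fintype.piFinset fun _ : Fin m => Dset S) := by
    intro x hx
    have h1 : Cconv (m + 1) f x ≠ 0 := left_ne_zero_of_mul (mem_support.1 hx)
    exact Finset.mem_coe.2 (Fintype.mem_piFinset.2 fun j => Cconv_mem_D hfS h1 j)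
  have hRsupp : support (fun z : G => corr f g z ^ (m + 1)) ⊆ ↑(Dset S) := by
    intro z hz
    apply corr_support hfS hgS
    exact mem_support.2 (fun h => mem_support.1 hz (by rw [h]; simp))
  rw [finsum_eq_sum_of_support_subset _ hLsupp, finsum_eq_sum_of_support_subset _ hRsupp]
  have hL : ∑ x ∈ Fintype.piFinset fun _ : Fin m => Dset S,
        Cconv (m + 1) f x * Cconv (m + 1) g x
      = ∑ u ∈ S, ∑ v ∈ S, f u * g v * corr f g (v - u) ^ m := by
    have step1 : ∀ x : Fin m → G, Cconv (m + 1) f x * Cconv (m + 1) g x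
        = ∑ u ∈ S, ∑ v ∈ S, f u * g v * ∏ j : Fin m, (f (u + x j) * g (v + x j)) := by
      intro x
      rw [Cconv_finset hfS m x, Cconv_finset hgS m x, Finset.sum_mul_sum]
      refine Finset.sum_congr rfl fun u _ => Finset.sum_congr rfl fun v _ => ?_
      rw [Finset.prod_mul_distrib]
      ring
    rw [Finset.sum_congr rfl fun x _ => step1 x, Finset.sum_comm]
    refine Finset.sum_congr rfl fun u hu => ?_
    rw [Finset.sum_comm]
    refine Finset.sum_congr rfl fun v _ => ?_
    rw [← Finset.mul_sum,
      Finset.sum_prod_piFinset (Dset S) fun (j : Fin m) (t : G) => f (u + t) * g (v + t)]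
    congr 1
    rw [Finset.prod_const, Finset.card_univ, Fintype.card_fin]
    congr 1
    have h := corr_shift (g := g) hfS hu v 0
    simp only [add_zero] at h
    rw [h]
  have hR : ∑ z ∈ Dset S, corr f g z ^ (m + 1)
      = ∑ u ∈ S, ∑ v ∈ S, f u * g v * corr f g (v - u) ^ m := by
    have step1 : ∀ z : G, corr f g z ^ (m + 1)
        = ∑ u ∈ S, f u * g (u + z) * corr f g z ^ m := by
      intro z
      calc corr f g z ^ (m + 1) = corr f g z ^ m * corr f g z := pow_succ _ _
        _ = corr f g z ^ m * ∑ u ∈ S, f u * g (u + z) :=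
            congrArg (corr f g z ^ m * ·) (corr_finset g hfS z)
        _ = ∑ u ∈ S, f u * g (u + z) * corr f g z ^ m := by
            rw [Finset.mul_sum]; exact Finset.sum_congr rfl fun u _ => by ring
    rw [Finset.sum_congr rfl fun z _ => step1 z, Finset.sum_comm]
    refine Finset.sum_congr rfl fun u _ => ?_
    have hshift := sum_D_eq_sum_S (S := S) u (fun z => f u * g (u + z) * corr f g z ^ m)
      (by
        intro z hz
        have h1 : f u ≠ 0 := left_ne_zero_of_mul (left_ne_zero_of_mul hz)
        have h2 : g (u + z) ≠ 0 := right_ne_zero_of_mul (left_ne_zero_of_mul hz)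
        have : z = (u + z) - u := by abel
        rw [this]
        exact mem_Dset (hgS (mem_support.2 h2)) (hfS (mem_support.2 h1)))
      (by
        intro v hv
        have h2 : g (u + (v - u)) ≠ 0 := right_ne_zero_of_mul (left_ne_zero_of_mul hv)
        have : u + (v - u) = v := by abel
        rw [this] at h2
        exact hgS (mem_support.2 h2))
    rw [hshift]
    refine Finset.sum_congr rfl fun v _ => ?_
    show f u * g (u + (v - u)) * corr f g (v - u) ^ m = f u * g v * corr f g (v - u) ^ m
    have h4 : u + (v - u) = v := by abel
    rw [h4]
  rw [hL, hR]

lemma key2aux (m : ℕ) (f g : G → ℂ) (hf : (support f).Finite) (hg : (support g).Finite)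
    (x : Fin m → G) :
    corr (Cconv (m + 1) f) (Cconv (m + 1) g) x = Cconv (m + 1) (corr f g) x := by
  classical
  set S : Finset G := hf.toFinset ∪ hg.toFinset with hS
  have hfS : support f ⊆ ↑S := by
    intro a ha; simp [hS, Set.Finite.mem_toFinset, ha]
  have hgS : support g ⊆ ↑S := by
    intro a ha; simp [hS, Set.Finite.mem_toFinset, ha]
  -- LHS
  have hLsupp : support (fun y : Fin m → G => Cconv (m + 1) f y * Cconv (m + 1) g (y + x))
      ⊆ ↑(Fintype.piFinset fun _ : Fin m => Dset S) := by
    intro y hy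
    have h1 : Cconv (m + 1) f y ≠ 0 := left_ne_zero_of_mul (mem_support.1 hy)
    exact Finset.mem_coe.2 (Fintype.mem_piFinset.2 fun j => Cconv_mem_D hfS h1 j)
  have hL : corr (Cconv (m + 1) f) (Cconv (m + 1) g) x
      = ∑ u ∈ S, ∑ v ∈ S, f u * g v *
          ∏ j : Fin m, ∑ t ∈ Dset S, f (u + t) * g (v + t + x j) := by
    show (∑ᶠ y : Fin m → G, Cconv (m + 1) f y * Cconv (m + 1) g (y + x)) = _
    rw [finsum_eq_sum_of_support_subset _ hLsupp]
    have step1 : ∀ y : Fin m → G, Cconv (m + 1) f y * Cconv (m + 1) g (y + x)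
        = ∑ u ∈ S, ∑ v ∈ S, f u * g v *
            ∏ j : Fin m, (f (u + y j) * g (v + y j + x j)) := by
      intro y
      rw [Cconv_finset hfS m y, Cconv_finset hgS m (y + x), Finset.sum_mul_sum]
      refine Finset.sum_congr rfl fun u _ => Finset.sum_congr rfl fun v _ => ?_
      rw [Finset.prod_mul_distrib]
      have harg : ∀ j : Fin m, v + (y + x) j = v + y j + x j := by
        intro j; simp [Pi.add_apply]; abel
      simp only [harg]
      ring
    rw [Finset.sum_congr rfl fun y _ => step1 y, Finset.sum_comm]
    refine Finset.sum_congr rfl fun u _ => ?_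
    rw [Finset.sum_comm]
    refine Finset.sum_congr rfl fun v _ => ?_
    rw [← Finset.mul_sum,
      Finset.sum_prod_piFinset (Dset S) fun (j : Fin m) (t : G) => f (u + t) * g (v + t + x j)]
  -- RHS
  have hcorrS : support (corr f g) ⊆ ↑(Dset S) := corr_support hfS hgS
  have hR : Cconv (m + 1) (corr f g) x
      = ∑ u ∈ S, ∑ v ∈ S, f u * g v *
          ∏ j : Fin m, ∑ t ∈ Dset S, f (u + t) * g (v + t + x j) := by
    rw [Cconv_finset hcorrS m x]
    have step1 : ∀ z : G, corr f g z * ∏ j : Fin m, corr f g (z + x j)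
        = ∑ u ∈ S, f u * g (u + z) * ∏ j : Fin m, corr f g (z + x j) := by
      intro z
      rw [corr_finset g hfS z, Finset.sum_mul]
    rw [Finset.sum_congr rfl fun z _ => step1 z, Finset.sum_comm]
    refine Finset.sum_congr rfl fun u hu => ?_
    have hshift := sum_D_eq_sum_S (S := S) u
      (fun z => f u * g (u + z) * ∏ j : Fin m, corr f g (z + x j))
      (by
        intro z hz
        have h1 : f u ≠ 0 := left_ne_zero_of_mul (left_ne_zero_of_mul hz)
        have h2 : g (u + z) ≠ 0 := right_ne_zero_of_mul (left_ne_zero_of_mul hz)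
        have : z = (u + z) - u := by abel
        rw [this]
        exact mem_Dset (hgS (mem_support.2 h2)) (hfS (mem_support.2 h1)))
      (by
        intro v hv
        have h2 : g (u + (v - u)) ≠ 0 := right_ne_zero_of_mul (left_ne_zero_of_mul hv)
        have : u + (v - u) = v := by abel
        rw [this] at h2
        exact hgS (mem_support.2 h2))
    rw [hshift]
    refine Finset.sum_congr rfl fun v _ => ?_
    show f u * g (u + (v - u)) * ∏ j : Fin m, corr f g ((v - u) + x j)
        = f u * g v * ∏ j : Fin m, ∑ t ∈ Dset S, f (u + t) * g (v + t + x j)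
    have h3 : u + (v - u) = v := by abel
    rw [h3]
    congr 1
    refine Finset.prod_congr rfl fun j _ => ?_
    exact corr_shift hfS hu v (x j)
  rw [hL, hR]

lemma key2 (m : ℕ) (f g : G → ℂ) (hf : (support f).Finite) (hg : (support g).Finite) :
    corr (Cconv (m + 1) f) (Cconv (m + 1) g) = Cconv (m + 1) (corr f g) :=
  funext fun x => key2aux m f g hf hg x

lemma supp_corr {f g : G → ℂ} (hf : (support f).Finite) (hg : (support g).Finite) :
    (support (corr f g)).Finite := by
  classical
  set S : Finset G := hf.toFinset ∪ hg.toFinset with hS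
  have hfS : support f ⊆ ↑S := by
    intro a ha; simp [hS, Set.Finite.mem_toFinset, ha]
  have hgS : support g ⊆ ↑S := by
    intro a ha; simp [hS, Set.Finite.mem_toFinset, ha]
  exact Set.Finite.subset (Dset S).finite_toSet (corr_support hfS hgS)

lemma supp_iter : ∀ (K : ℕ) (g : Fin (K + 1) → G → ℂ), (∀ i, (support (g i)).Finite) →
    (support (iterCorr K g)).Finite
  | 0, g, hg => hg 0
  | K + 1, g, hg => by
    show (support (corr (g 0) (iterCorr K fun i => g i.succ))).Finite
    exact supp_corr (hg 0) (supp_iter K (fun i => g i.succ) fun i => hg i.succ)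

lemma iter_Cconv (m : ℕ) : ∀ (K : ℕ) (g : Fin (K + 1) → G → ℂ),
    (∀ i, (support (g i)).Finite) →
    iterCorr K (fun j => Cconv (m + 1) (g j)) = Cconv (m + 1) (iterCorr K g)
  | 0, g, hg => rfl
  | K + 1, g, hg => by
    show corr (Cconv (m + 1) (g 0)) (iterCorr K fun i => Cconv (m + 1) (g i.succ))
        = Cconv (m + 1) (corr (g 0) (iterCorr K fun i => g i.succ))
    rw [iter_Cconv m K (fun i => g i.succ) fun i => hg i.succ]
    exact key2 m (g 0) (iterCorr K fun i => g i.succ) (hg 0)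
      (supp_iter K (fun i => g i.succ) fun i => hg i.succ)

end Aux

theorem stmt_7 {G : Type*} [AddCommGroup G] (l K : ℕ) (hl : 1 ≤ l)
    (f : Fin (K + 2) → G → ℂ) (hf : ∀ i, (Function.support (f i)).Finite) :
    (∑ᶠ x : Fin (l - 1) → G,
        Cconv l (f 0) x * iterCorr K (fun j : Fin (K + 1) => Cconv l (f j.succ)) x)
      = ∑ᶠ z : G, (iterCorr (K + 1) f z) ^ l := by
  obtain ⟨m, rfl⟩ : ∃ m, l = m + 1 := ⟨l - 1, by omega⟩
  rw [iter_Cconv m K (fun j => f j.succ) fun i => hf i.succ]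
  exact key1 m (f 0) (iterCorr K fun j => f j.succ) (hf 0)
    (supp_iter K (fun j => f j.succ) fun i => hf i.succ)
end

section
/- For finitely supported nonnegative functions φ₁,…,φ_k : G^l → ℝ on an abelian group G, where each φ_j = (φ_j^{(1)},…,φ_j^{(l)}) is a tuple of l functions G → ℝ≥0, the following holds: |Σ_{x∈G^{l−1}} C_l(φ₁)(x)⋯C_l(φ_k)(x)| ≤ ∏_{j=1}^k ∏_{i=1}^l ‖φ_j^{(i)}‖_{E_{k,l}}, where ‖f‖_{E_{k,l}}^{kl} := Σ_{x₁,…,x_{k−1}} (C_k(f)(x₁,…,x_{k−1}))^l. -/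
open Finset

/-- `C_l(f₁,…,f_l)(x₁,…,x_{l-1}) = Σ_z ∏ᵢ fᵢ(z + xᵢ)` (with `x₀ = 0`). -/
noncomputable def CconvT {G : Type*} [AddCommGroup G] (l : ℕ) (f : Fin l → G → ℝ)
    (x : Fin (l - 1) → G) : ℝ :=
  ∑ᶠ z : G, ∏ i : Fin l, f i (z + ext l x i)

/-- The `E_{k,l}` norm: `‖f‖_{E_{k,l}} = (Σ_{x ∈ G^{k-1}} C_k(f)(x)^l)^{1/(kl)}`. -/
noncomputable def normEkl {G : Type*} [AddCommGroup G] (k l : ℕ) (f : G → ℝ) : ℝ :=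
  (∑ᶠ x : Fin (k - 1) → G, (CconvT k (fun _ => f) x) ^ l) ^ ((1 : ℝ) / (k * l))

/-! Hölder's inequality is used twice. Over `x`, Hölder with `k` factors bounds the sum by
`∏ⱼ (Σₓ C_l(φⱼ)(x)^k)^{1/k}`. Expanding `C_l(φⱼ)(x)^k` gives a sum over the grid `z_m + x_i`
(`m < k`, `i < l`, normalised by `x₀ = 0`); shifting the normalisation to `z₀ = 0` turns it into
`Σᵤ ∏ᵢ C_k(φⱼ⁽ⁱ⁾)(u)`, and Hölder with `l` factors bounds this by `∏ᵢ ‖φⱼ⁽ⁱ⁾‖_{E_{k,l}}^k`. -/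

open Function MeasureTheory Pointwise

theorem Finset.sum_prod_rpow_le_prod_sum_rpow {α ι : Type*} (A : Finset α) (s : Finset ι)
    (g : ι → α → ℝ) (hg : ∀ i ∈ s, ∀ a ∈ A, 0 ≤ g i a) (p : ι → ℝ)
    (hp : ∑ i ∈ s, p i = 1) (hp₀ : ∀ i ∈ s, 0 ≤ p i) :
    ∑ a ∈ A, ∏ i ∈ s, g i a ^ p i ≤ ∏ i ∈ s, (∑ a ∈ A, g i a) ^ p i := by
  let _ : MeasurableSpace α := ⊤
  have key := ENNReal.lintegral_prod_norm_pow_le (μ := ∑ a ∈ A, Measure.dirac a) s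
    (f := fun i a => ENNReal.ofReal (g i a)) (fun _ _ => measurable_from_top.aemeasurable) hp hp₀
  simp only [lintegral_finsetSum_measure, lintegral_dirac' _ measurable_from_top] at key
  have hsum : ∀ i ∈ s, 0 ≤ ∑ a ∈ A, g i a := fun i hi => sum_nonneg (hg i hi)
  rw [← ENNReal.ofReal_le_ofReal_iff (prod_nonneg fun i hi => Real.rpow_nonneg (hsum i hi) _),
    ENNReal.ofReal_sum_of_nonneg fun a ha => prod_nonneg fun i hi =>
      Real.rpow_nonneg (hg i hi a ha) _,
    ENNReal.ofReal_prod_of_nonneg fun i hi => Real.rpow_nonneg (hsum i hi) _]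
  convert key using 2 with a ha i hi
  · rw [ENNReal.ofReal_prod_of_nonneg fun i hi => Real.rpow_nonneg (hg i hi a ha) _]
    exact prod_congr rfl fun i hi => (ENNReal.ofReal_rpow_of_nonneg (hg i hi a ha) (hp₀ i hi)).symm
  · rw [← ENNReal.ofReal_rpow_of_nonneg (hsum i hi) (hp₀ i hi),
      ENNReal.ofReal_sum_of_nonneg (hg i hi)]

theorem finsum_prod_le_prod_finsum_pow {α : Type*} {n : ℕ} (hn : n ≠ 0) (g : Fin n → α → ℝ)
    (hg : ∀ j a, 0 ≤ g j a) (hfin : ∀ j, (support (g j)).Finite) :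
    ∑ᶠ a, ∏ j, g j a ≤ ∏ j, (∑ᶠ a, g j a ^ n) ^ (n⁻¹ : ℝ) := by
  set A := (Set.finite_iUnion hfin).toFinset
  have hA : ∀ j, support (g j) ⊆ A := fun j => by
    simpa [A] using Set.subset_iUnion (fun j => support (g j)) j
  have hA' : support (fun a => ∏ j, g j a) ⊆ A := fun a ha =>
    hA ⟨0, by omega⟩ fun h => ha (prod_eq_zero (mem_univ _) h)
  rw [finsum_eq_sum_of_support_subset _ hA']
  simp_rw [finsum_eq_sum_of_support_subset _ ((support_pow (g _) hn).subset.trans (hA _))]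
  have hn' : (n : ℝ) ≠ 0 := by exact_mod_cast hn
  convert sum_prod_rpow_le_prod_sum_rpow A univ (fun j a => g j a ^ n)
    (fun j _ a _ => pow_nonneg (hg j a) n) (fun _ => (n⁻¹ : ℝ)) (by simp [hn']) (by simp)
    using 3 with a
  exact (Real.pow_rpow_inv_natCast (hg _ a) hn).symm

theorem Finset.prod_univ_finsum {ι α M : Type*} [Fintype ι] [CommSemiring M] (F : ι → α → M)
    (hF : ∀ i, (support (F i)).Finite) :
    ∏ i, ∑ᶠ z, F i z = ∑ᶠ a : ι → α, ∏ i, F i (a i) := by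
  classical
  set s := (Set.finite_iUnion hF).toFinset
  have hs : ∀ i, support (F i) ⊆ s := fun i => by
    simpa [s] using Set.subset_iUnion (fun i => support (F i)) i
  rw [prod_congr rfl fun i _ => finsum_eq_sum_of_support_subset _ (hs i), prod_univ_sum,
    finsum_eq_sum_of_support_subset]
  intro a ha
  simpa using fun i => hs i fun h => ha (prod_eq_zero (mem_univ i) h)

section Convolution

variable {G : Type*} [AddCommGroup G]

@[simp]
lemma ext_zero {l : ℕ} (hl : 0 < l) (x : Fin (l - 1) → G) : ext l x ⟨0, hl⟩ = 0 := rfl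

@[simp]
lemma ext_succ {l : ℕ} (x : Fin (l - 1) → G) (i : Fin (l - 1)) :
    ext l x ⟨i + 1, by omega⟩ = x i := by
  simp [_root_.ext]

lemma cconvT_nonneg {l : ℕ} {f : Fin l → G → ℝ} (hf : ∀ i t, 0 ≤ f i t) (x : Fin (l - 1) → G) :
    0 ≤ CconvT l f x :=
  finsum_nonneg fun _ => prod_nonneg fun i _ => hf i _

lemma mem_pi_sub_of_prod_ne_zero {l : ℕ} (hl : 0 < l) {f : Fin l → G → ℝ} {S : Set G}
    (hS : ∀ i, support (f i) ⊆ S) {z : G} {x : Fin (l - 1) → G}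
    (h : ∏ i, f i (z + ext l x i) ≠ 0) : z ∈ S ∧ x ∈ Set.univ.pi fun _ => S - S := by
  have hmem : ∀ i, z + ext l x i ∈ S := fun i => hS i (prod_ne_zero_iff.1 h i (mem_univ i))
  have hz : z ∈ S := by simpa using hmem ⟨0, hl⟩
  exact ⟨hz, fun i _ =>
    ⟨z + x i, by simpa using hmem ⟨i + 1, by omega⟩, z, hz, add_sub_cancel_left z (x i)⟩⟩

lemma support_cconvT_finite {l : ℕ} (hl : 0 < l) {f : Fin l → G → ℝ}
    (hf : ∀ i, (support (f i)).Finite) : (support (CconvT l f)).Finite := by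
  have hS := Set.finite_iUnion hf
  refine (Set.Finite.pi fun _ => hS.sub hS).subset fun x hx => ?_
  obtain ⟨z, hz⟩ : ∃ z, ∏ i, f i (z + ext l x i) ≠ 0 := by
    by_contra! h
    exact hx (finsum_eq_zero_of_forall_eq_zero h)
  exact (mem_pi_sub_of_prod_ne_zero hl (Set.subset_iUnion (fun i => support (f i))) hz).2

def gridProd {k l : ℕ} (ψ : Fin k → Fin l → G → ℝ) (a : Fin k → G) (b : Fin l → G) : ℝ :=
  ∏ j, ∏ i, ψ j i (a j + b i)

variable {k l : ℕ} {ψ : Fin k → Fin l → G → ℝ}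

lemma prod_cconvT_eq_finsum_gridProd (hl : 0 < l) (hψ : ∀ j i, (support (ψ j i)).Finite)
    (x : Fin (l - 1) → G) : ∏ j, CconvT l (ψ j) x = ∑ᶠ a, gridProd ψ a (ext l x) :=
  prod_univ_finsum _ fun j => (Set.finite_iUnion (hψ j)).subset fun _ hz =>
    (mem_pi_sub_of_prod_ne_zero hl (Set.subset_iUnion (fun i => support (ψ j i))) hz).1

lemma finsum_prod_cconvT_eq (hk : 0 < k) (hl : 0 < l) (hψ : ∀ j i, (support (ψ j i)).Finite) :
    ∑ᶠ x, ∏ j, CconvT l (ψ j) x =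
      ∑ᶠ p : (Fin (l - 1) → G) × (Fin k → G), gridProd ψ p.2 (ext l p.1) := by
  simp_rw [prod_cconvT_eq_finsum_gridProd hl hψ]
  refine (finsum_curry (fun p : (Fin (l - 1) → G) × (Fin k → G) => gridProd ψ p.2 (ext l p.1))
    ?_).symm
  set S := ⋃ j, ⋃ i, support (ψ j i)
  have hS : S.Finite := Set.finite_iUnion fun j => Set.finite_iUnion (hψ j)
  have hSψ : ∀ j i, support (ψ j i) ⊆ S := Set.subset_iUnion₂ (s := fun j i => support (ψ j i))
  refine ((Set.Finite.pi fun _ => hS.sub hS).prod (Set.Finite.pi fun _ => hS)).subset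
    fun p hp => ?_
  have hrow : ∀ j, ∏ i, ψ j i (p.2 j + ext l p.1 i) ≠ 0 := fun j h =>
    hp (prod_eq_zero (mem_univ j) h)
  exact ⟨(mem_pi_sub_of_prod_ne_zero hl (hSψ ⟨0, hk⟩) (hrow ⟨0, hk⟩)).2,
    fun j _ => (mem_pi_sub_of_prod_ne_zero hl (hSψ j) (hrow j)).1⟩

/-- `(x, a) ↦ (a - a₀, x + a₀)`: moves the normalisation `x₀ = 0` of the grid `a j + x i` to
the other side without changing the grid. -/
def rebase {m n : ℕ} (hn : 0 < n) (p : (Fin (m - 1) → G) × (Fin n → G)) :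
    (Fin (n - 1) → G) × (Fin m → G) :=
  (fun j => p.2 ⟨j + 1, by omega⟩ - p.2 ⟨0, hn⟩, fun i => p.2 ⟨0, hn⟩ + ext m p.1 i)

lemma ext_rebase_fst {m n : ℕ} (hn : 0 < n) (p : (Fin (m - 1) → G) × (Fin n → G)) (j : Fin n) :
    ext n (rebase hn p).1 j = p.2 j - p.2 ⟨0, hn⟩ := by
  obtain ⟨j, hj⟩ := j
  rcases j with _ | j
  · simp
  · exact ext_succ (rebase hn p).1 ⟨j, by omega⟩

lemma rebase_rebase {m n : ℕ} (hm : 0 < m) (hn : 0 < n) (p : (Fin (m - 1) → G) × (Fin n → G)) :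
    rebase hm (rebase hn p) = p := by
  refine Prod.ext (funext fun i => ?_) (funext fun j => ?_)
  · simp [rebase]
  · change (rebase hn p).2 ⟨0, hm⟩ + ext n (rebase hn p).1 j = p.2 j
    rw [ext_rebase_fst]
    simp [rebase]

lemma gridProd_rebase (hk : 0 < k) (p : (Fin (l - 1) → G) × (Fin k → G)) :
    gridProd ψ p.2 (ext l p.1) =
      gridProd (fun i j => ψ j i) (rebase hk p).2 (ext k (rebase hk p).1) := by
  rw [gridProd, gridProd, prod_comm]
  refine prod_congr rfl fun i _ => prod_congr rfl fun j _ => ?_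
  rw [ext_rebase_fst]
  simp only [rebase]
  abel_nf

theorem finsum_prod_cconvT_comm (hk : 0 < k) (hl : 0 < l)
    (hψ : ∀ j i, (support (ψ j i)).Finite) :
    ∑ᶠ x, ∏ j, CconvT l (ψ j) x = ∑ᶠ u, ∏ i, CconvT k (fun j => ψ j i) u := by
  rw [finsum_prod_cconvT_eq hk hl hψ, finsum_prod_cconvT_eq hl hk fun i j => hψ j i]
  exact finsum_eq_of_bijective (rebase hk)
    (bijective_iff_has_inverse.2 ⟨rebase hl, rebase_rebase hl hk, rebase_rebase hk hl⟩)
    (gridProd_rebase hk)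

end Convolution

section Norm

variable {G : Type*} [AddCommGroup G] {k l : ℕ}

lemma normEkl_nonneg {f : G → ℝ} (hf : ∀ t, 0 ≤ f t) : 0 ≤ normEkl k l f :=
  Real.rpow_nonneg (finsum_nonneg fun _ => pow_nonneg (cconvT_nonneg (fun _ => hf) _) _) _

lemma normEkl_pow (hk : k ≠ 0) {f : G → ℝ} (hf : ∀ t, 0 ≤ f t) :
    normEkl k l f ^ k = (∑ᶠ u, CconvT k (fun _ => f) u ^ l) ^ (l⁻¹ : ℝ) := by
  rw [normEkl, ← Real.rpow_natCast, ← Real.rpow_mul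
    (finsum_nonneg fun _ => pow_nonneg (cconvT_nonneg (fun _ => hf) _) _)]
  congr 1
  field_simp

lemma finsum_cconvT_pow_rpow_inv_le (hk : 0 < k) (hl : 0 < l) {f : Fin l → G → ℝ}
    (hf : ∀ i t, 0 ≤ f i t) (hfin : ∀ i, (support (f i)).Finite) :
    (∑ᶠ x, CconvT l f x ^ k) ^ (k⁻¹ : ℝ) ≤ ∏ i, normEkl k l (f i) := by
  have hpow : ∑ᶠ x, CconvT l f x ^ k ≤ (∏ i, normEkl k l (f i)) ^ k :=
    calc ∑ᶠ x, CconvT l f x ^ k = ∑ᶠ x, ∏ _j : Fin k, CconvT l f x := by simp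
      _ = ∑ᶠ u, ∏ i, CconvT k (fun _ => f i) u :=
        finsum_prod_cconvT_comm hk hl fun _ => hfin
      _ ≤ ∏ i, (∑ᶠ u, CconvT k (fun _ => f i) u ^ l) ^ (l⁻¹ : ℝ) :=
        finsum_prod_le_prod_finsum_pow hl.ne' _ (fun i => cconvT_nonneg fun _ => hf i)
          fun i => support_cconvT_finite hk fun _ => hfin i
      _ = (∏ i, normEkl k l (f i)) ^ k := by
        rw [← prod_pow]
        exact prod_congr rfl fun i _ => (normEkl_pow hk.ne' (hf i)).symm
  calc (∑ᶠ x, CconvT l f x ^ k) ^ (k⁻¹ : ℝ) ≤ ((∏ i, normEkl k l (f i)) ^ k) ^ (k⁻¹ : ℝ) :=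
        Real.rpow_le_rpow (finsum_nonneg fun _ => pow_nonneg (cconvT_nonneg hf _) _) hpow
          (by positivity)
    _ = ∏ i, normEkl k l (f i) :=
        Real.pow_rpow_inv_natCast (prod_nonneg fun i _ => normEkl_nonneg (hf i)) hk.ne'

end Norm

theorem stmt_18 {G : Type*} [AddCommGroup G] (k l : ℕ) (hk : 2 ≤ k) (hl : 2 ≤ l)
    (φ : Fin k → Fin l → G → ℝ) (hpos : ∀ j i t, 0 ≤ φ j i t)
    (hsupp : ∀ j i, (Function.support (φ j i)).Finite) :
    |∑ᶠ x : Fin (l - 1) → G, ∏ j : Fin k, CconvT l (φ j) x|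
      ≤ ∏ j : Fin k, ∏ i : Fin l, normEkl k l (φ j i) := by
  have hk₀ : 0 < k := by omega
  have hl₀ : 0 < l := by omega
  have hC : ∀ j x, 0 ≤ CconvT l (φ j) x := fun j => cconvT_nonneg (hpos j)
  rw [abs_of_nonneg (finsum_nonneg fun x => prod_nonneg fun j _ => hC j x)]
  calc ∑ᶠ x, ∏ j, CconvT l (φ j) x ≤ ∏ j, (∑ᶠ x, CconvT l (φ j) x ^ k) ^ (k⁻¹ : ℝ) :=
        finsum_prod_le_prod_finsum_pow hk₀.ne' _ hC fun j => support_cconvT_finite hl₀ (hsupp j)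
    _ ≤ ∏ j, ∏ i, normEkl k l (φ j i) :=
        prod_le_prod (fun j _ => Real.rpow_nonneg (finsum_nonneg fun x => pow_nonneg (hC j x) k) _)
          fun j _ => finsum_cconvT_pow_rpow_inv_le hk₀ hl₀ (hpos j) (hsupp j)
end

section
/- For finitely supported functions f : G → ℝ on an abelian group G and integers k, l ≥ 2, one has the identity Σ_{x₁,…,x_{k−1}} (C_k(f)(x₁,…,x_{k−1}))^l = Σ_{y₁,…,y_{l−1}} (C_l(f)(y₁,…,y_{l−1}))^k. -/
open Finset Pointwise

/-- `C_m(f)(x₁,…,x_{m-1}) = Σ_z f(z) f(z+x₁) ⋯ f(z+x_{m-1})`. -/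
noncomputable def CconvR {G : Type*} [AddCommGroup G] (m : ℕ) (f : G → ℝ)
    (x : Fin (m - 1) → G) : ℝ :=
  ∑ᶠ z : G, ∏ i : Fin m, f (z + ext m x i)

section Aux
variable {G : Type*} [AddCommGroup G]

lemma ext_zero' (m : ℕ) (x : Fin (m - 1) → G) (i : Fin m) (h : i.1 = 0) :
    ext m x i = 0 := by unfold _root_.ext; rw [dif_pos h]

lemma ext_succ' (m : ℕ) (x : Fin (m - 1) → G) (i : Fin m) (j : Fin (m - 1))
    (h : i.1 = j.1 + 1) : ext m x i = x j := by
  have h0 : ¬ i.1 = 0 := by omega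
  unfold _root_.ext
  rw [dif_neg h0]
  exact congrArg x (Fin.ext (show i.1 - 1 = j.1 by omega))

lemma recon_eq (l : ℕ) (hl : 0 < l) (p : Fin l → G) :
    (fun j => p ⟨0, hl⟩ + ext l (fun j' : Fin (l - 1) =>
      p ⟨j'.1 + 1, by omega⟩ - p ⟨0, hl⟩) j) = p := by
  funext j
  by_cases hj : j.1 = 0
  · rw [ext_zero' l _ j hj]
    have : j = ⟨0, hl⟩ := Fin.ext hj
    rw [this]; abel
  · have hj1 : j.1 = (j.1 - 1) + 1 := by omega
    rw [ext_succ' l _ j ⟨j.1 - 1, by omega⟩ hj1]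
    have : (⟨(j.1 - 1) + 1, by omega⟩ : Fin l) = j := Fin.ext (show j.1 - 1 + 1 = j.1 by omega)
    rw [this]; abel

lemma reindex (l : ℕ) (hl : 0 < l) (S D : Finset G)
    (hD : ∀ a b : G, a ∈ S → b ∈ S → b - a ∈ D)
    (F : (Fin l → G) → ℝ) (hF : ∀ p, F p ≠ 0 → ∀ j, p j ∈ S) :
    ∑ p ∈ Fintype.piFinset (fun _ : Fin l => S), F p
      = ∑ c ∈ S, ∑ y ∈ Fintype.piFinset (fun _ : Fin (l - 1) => D),
          F (fun j => c + ext l y j) := by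
  rw [← Finset.sum_product']
  refine Finset.sum_bij_ne_zero
    (fun p _ _ => (p ⟨0, hl⟩, fun j : Fin (l - 1) => p ⟨j.1 + 1, by omega⟩ - p ⟨0, hl⟩))
    ?_ ?_ ?_ ?_
  · intro p hp hne
    simp only [Finset.mem_product, Fintype.mem_piFinset] at hp ⊢
    exact ⟨hp _, fun j => hD _ _ (hp _) (hp _)⟩
  · intro p₁ h₁₁ h₁₂ p₂ h₂₁ h₂₂ e
    have e1 : p₁ ⟨0, hl⟩ = p₂ ⟨0, hl⟩ := congrArg Prod.fst e
    have e2 := congrArg Prod.snd e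
    funext j
    by_cases hj : j.1 = 0
    · have : j = ⟨0, hl⟩ := Fin.ext hj
      rw [this]; exact e1
    · have hj1 : j.1 - 1 < l - 1 := by omega
      have h3 := congrFun e2 ⟨j.1 - 1, hj1⟩
      simp only at h3
      have hjj : (⟨(j.1 - 1) + 1, by omega⟩ : Fin l) = j :=
        Fin.ext (show j.1 - 1 + 1 = j.1 by omega)
      rw [hjj, e1] at h3
      exact sub_left_inj.mp h3
  · intro q hq hne
    refine ⟨fun j => q.1 + ext l q.2 j, ?_, ?_, ?_⟩
    · simp only [Fintype.mem_piFinset]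
      exact hF _ hne
    · exact hne
    · obtain ⟨c, y⟩ := q
      refine Prod.ext ?_ ?_
      · show c + ext l y ⟨0, hl⟩ = c
        rw [ext_zero' l y _ rfl, add_zero]
      · funext j
        show c + ext l y ⟨j.1 + 1, by omega⟩ - (c + ext l y ⟨0, hl⟩) = y j
        rw [ext_succ' l y _ j rfl, ext_zero' l y _ rfl]
        abel
  · intro p h₁ h₂
    conv_lhs => rw [← recon_eq l hl p]

end Aux
theorem stmt_19 {G : Type*} [AddCommGroup G] (k l : ℕ) (hk : 2 ≤ k) (hl : 2 ≤ l)
    (f : G → ℝ) (hf : (Function.support f).Finite) :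
    (∑ᶠ x : Fin (k - 1) → G, (CconvR k f x) ^ l)
      = ∑ᶠ y : Fin (l - 1) → G, (CconvR l f y) ^ k := by
  classical
  set S : Finset G := hf.toFinset with hSdef
  set D : Finset G := S - S with hDdef
  have hmemS : ∀ z : G, f z ≠ 0 → z ∈ S := fun z hz => hf.mem_toFinset.mpr hz
  have hD : ∀ a b : G, a ∈ S → b ∈ S → b - a ∈ D := fun a b ha hb =>
    Finset.mem_sub.mpr ⟨b, hb, a, ha, rfl⟩
  have L1 : ∀ (m : ℕ) (hm : 0 < m) (x : Fin (m - 1) → G),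
      CconvR m f x = ∑ z ∈ S, ∏ i : Fin m, f (z + ext m x i) := by
    intro m hm x
    apply finsum_eq_finset_sum_of_support_subset
    intro z hz
    have hz' : (∏ i : Fin m, f (z + ext m x i)) ≠ 0 := hz
    have hfz : f z ≠ 0 := by
      intro h0
      exact hz' (Finset.prod_eq_zero (Finset.mem_univ (⟨0, hm⟩ : Fin m))
        (by rw [ext_zero' m x _ rfl, add_zero]; exact h0))
    exact Finset.mem_coe.mpr (hmemS z hfz)
  have key : ∀ (m : ℕ) (hm : 2 ≤ m) (x : Fin (m - 1) → G),
      CconvR m f x ≠ 0 → ∀ j, x j ∈ D := by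
    intro m hm x hx j
    obtain ⟨z, hz⟩ : ∃ z, (∏ i : Fin m, f (z + ext m x i)) ≠ 0 := by
      by_contra h
      push_neg at h
      exact hx (finsum_eq_zero_of_forall_eq_zero h)
    have h0 : f z ≠ 0 := fun h0 => hz (Finset.prod_eq_zero
      (Finset.mem_univ (⟨0, by omega⟩ : Fin m))
      (by rw [ext_zero' m x _ rfl, add_zero]; exact h0))
    have hj : f (z + x j) ≠ 0 := fun h1 => hz (Finset.prod_eq_zero
      (Finset.mem_univ (⟨j.1 + 1, by omega⟩ : Fin m))
      (by rw [ext_succ' m x _ j rfl]; exact h1))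
    have := hD z (z + x j) (hmemS z h0) (hmemS _ hj)
    simpa using this
  have L2 : ∀ (m n : ℕ) (hm : 2 ≤ m) (hn : n ≠ 0),
      (∑ᶠ x : Fin (m - 1) → G, (CconvR m f x) ^ n)
        = ∑ x ∈ Fintype.piFinset (fun _ : Fin (m - 1) => D), (CconvR m f x) ^ n := by
    intro m n hm hn
    apply finsum_eq_finset_sum_of_support_subset
    intro x hx
    have hx' : (CconvR m f x) ^ n ≠ 0 := hx
    have hC : CconvR m f x ≠ 0 := fun h => hx' (by rw [h]; exact zero_pow hn)
    exact Finset.mem_coe.mpr (Fintype.mem_piFinset.mpr (key m hm x hC))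
  have main : ∀ (m n : ℕ) (hm : 2 ≤ m) (hn : 2 ≤ n),
      (∑ x ∈ Fintype.piFinset (fun _ : Fin (m - 1) => D), (CconvR m f x) ^ n)
        = ∑ x ∈ Fintype.piFinset (fun _ : Fin (m - 1) => D), ∑ c ∈ S,
            ∑ y ∈ Fintype.piFinset (fun _ : Fin (n - 1) => D),
              ∏ j : Fin n, ∏ i : Fin m, f (c + ext n y j + ext m x i) := by
    intro m n hm hn
    refine Finset.sum_congr rfl fun x _ => ?_
    rw [L1 m (by omega) x]
    have hpow : (∑ z ∈ S, ∏ i : Fin m, f (z + ext m x i)) ^ n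
        = ∏ _j : Fin n, ∑ z ∈ S, ∏ i : Fin m, f (z + ext m x i) := by
      rw [Finset.prod_const]; simp
    rw [hpow, Finset.prod_univ_sum]
    rw [reindex n (by omega) S D hD
      (fun p => ∏ j : Fin n, ∏ i : Fin m, f (p j + ext m x i)) ?_]
    · intro p hp j
      have h1 : (∏ i : Fin m, f (p j + ext m x i)) ≠ 0 :=
        fun h => hp (Finset.prod_eq_zero (Finset.mem_univ j) h)
      have h2 : f (p j) ≠ 0 := fun h => h1 (Finset.prod_eq_zero
        (Finset.mem_univ (⟨0, by omega⟩ : Fin m))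
        (by rw [ext_zero' m x _ rfl, add_zero]; exact h))
      exact hmemS _ h2
  rw [L2 k l hk (by omega), L2 l k hl (by omega), main k l hk hl, main l k hl hk]
  have swap : ∀ (c : G) (x : Fin (k - 1) → G) (y : Fin (l - 1) → G),
      (∏ j : Fin l, ∏ i : Fin k, f (c + ext l y j + ext k x i))
        = ∏ j : Fin k, ∏ i : Fin l, f (c + ext k x j + ext l y i) := by
    intro c x y
    rw [Finset.prod_comm]
    refine Finset.prod_congr rfl fun i _ => Finset.prod_congr rfl fun j _ => ?_
    rw [add_right_comm]
  calc (∑ x ∈ Fintype.piFinset (fun _ : Fin (k - 1) => D), ∑ c ∈ S,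
          ∑ y ∈ Fintype.piFinset (fun _ : Fin (l - 1) => D),
            ∏ j : Fin l, ∏ i : Fin k, f (c + ext l y j + ext k x i))
      = ∑ x ∈ Fintype.piFinset (fun _ : Fin (k - 1) => D), ∑ c ∈ S,
          ∑ y ∈ Fintype.piFinset (fun _ : Fin (l - 1) => D),
            ∏ j : Fin k, ∏ i : Fin l, f (c + ext k x j + ext l y i) := by
        refine Finset.sum_congr rfl fun x _ => Finset.sum_congr rfl fun c _ =>
          Finset.sum_congr rfl fun y _ => swap c x y
    _ = ∑ c ∈ S, ∑ x ∈ Fintype.piFinset (fun _ : Fin (k - 1) => D),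
          ∑ y ∈ Fintype.piFinset (fun _ : Fin (l - 1) => D),
            ∏ j : Fin k, ∏ i : Fin l, f (c + ext k x j + ext l y i) := Finset.sum_comm
    _ = ∑ c ∈ S, ∑ y ∈ Fintype.piFinset (fun _ : Fin (l - 1) => D),
          ∑ x ∈ Fintype.piFinset (fun _ : Fin (k - 1) => D),
            ∏ j : Fin k, ∏ i : Fin l, f (c + ext k x j + ext l y i) :=
        Finset.sum_congr rfl fun c _ => Finset.sum_comm
    _ = ∑ y ∈ Fintype.piFinset (fun _ : Fin (l - 1) => D), ∑ c ∈ S,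
          ∑ x ∈ Fintype.piFinset (fun _ : Fin (k - 1) => D),
            ∏ j : Fin k, ∏ i : Fin l, f (c + ext k x j + ext l y i) := Finset.sum_comm
end
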